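/- Let n be a finite index type, let T and T′ be n×n diagonal complex matrices, let Q be an invertible n×n complex matrix with Q·T = T′·Q, let S′ be any n×n complex matrix, and set S = Q⁻¹·S′·Q. If S_{x,y} ≠ 0 for some indices x, y, then there exist indices a, b with S′_{a,b} ≠ 0, T′_{a,a} = T_{x,x}, and T′_{b,b} = T_{y,y}. -/
import Mathlib


open Matrix

lemma mul_diag_apply' {n : Type*} [Fintype n] [DecidableEq n]
    (A T : Matrix n n ℂ) (hT : T.IsDiag) (i j : n) :
    (A * T) i j = A i j * T j j := by
  rw [Matrix.mul_apply]
  refine Finset.sum_eq_single j (fun k _ hk => ?_) (by simp)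
  rw [hT hk, mul_zero]

lemma diag_mul_apply' {n : Type*} [Fintype n] [DecidableEq n]
    (T A : Matrix n n ℂ) (hT : T.IsDiag) (i j : n) :
    (T * A) i j = T i i * A i j := by
  rw [Matrix.mul_apply]
  refine Finset.sum_eq_single i (fun k _ hk => ?_) (by simp)
  rw [hT (Ne.symm hk), zero_mul]

theorem stmt_6 {n : Type*} [Fintype n] [DecidableEq n]
    (T T' Q S' : Matrix n n ℂ)
    (hT : T.IsDiag) (hT' : T'.IsDiag)
    (hQ : IsUnit Q.det) (hQT : Q * T = T' * Q)
    (S : Matrix n n ℂ) (hS : S = Q⁻¹ * S' * Q)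
    (x y : n) (hxy : S x y ≠ 0) :
    ∃ a b : n, S' a b ≠ 0 ∧ T' a a = T x x ∧ T' b b = T y y := by
  have h1 : Q⁻¹ * T' = T * Q⁻¹ := by
    calc Q⁻¹ * T' = Q⁻¹ * T' * (Q * Q⁻¹) := by
          rw [Matrix.mul_nonsing_inv Q hQ, mul_one]
      _ = Q⁻¹ * (T' * Q) * Q⁻¹ := by rw [Matrix.mul_assoc, Matrix.mul_assoc, Matrix.mul_assoc]
      _ = Q⁻¹ * Q * T * Q⁻¹ := by rw [← hQT, Matrix.mul_assoc, Matrix.mul_assoc, Matrix.mul_assoc, Matrix.mul_assoc]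
      _ = T * Q⁻¹ := by rw [Matrix.nonsing_inv_mul Q hQ, one_mul]
  rw [hS, Matrix.mul_apply] at hxy
  obtain ⟨b, _, hb⟩ := Finset.exists_ne_zero_of_sum_ne_zero hxy
  have hQb : Q b y ≠ 0 := right_ne_zero_of_mul hb
  have hb' : (Q⁻¹ * S') x b ≠ 0 := left_ne_zero_of_mul hb
  rw [Matrix.mul_apply] at hb'
  obtain ⟨a, _, ha⟩ := Finset.exists_ne_zero_of_sum_ne_zero hb'
  have hQa : Q⁻¹ x a ≠ 0 := left_ne_zero_of_mul ha
  refine ⟨a, b, right_ne_zero_of_mul ha, ?_, ?_⟩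
  · have := congrFun (congrFun h1 x) a
    rw [mul_diag_apply' _ _ hT' x a, diag_mul_apply' _ _ hT x a] at this
    have h2 : Q⁻¹ x a * T' a a = Q⁻¹ x a * T x x := by linear_combination this
    exact mul_left_cancel₀ hQa h2
  · have := congrFun (congrFun hQT b) y
    rw [mul_diag_apply' _ _ hT b y, diag_mul_apply' _ _ hT' b y] at this
    have h2 : Q b y * T' b b = Q b y * T y y := by linear_combination -this
    exact mul_left_cancel₀ hQb h2
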